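/- arXiv:1909.07128 — 3 statements merged into one kernel-verified Lean document; each statement's English description precedes it below -/
import Mathlib

section
/- Let N be divisible by 8, h = 8 ε N⁻¹ ln N (i.e., τ₀ = 2/γ with γ chosen so that γh/ε = 8 N⁻¹ ln N). Then there is a constant C > 0 independent of N and ε such that for all i with 1 ≤ i ≤ N/4, (1 + 8 N⁻¹ ln N)^{-i} ≤ C N^{-8i/N}. -/
/-- Barrier function decay inside the layer: with γh/ε = 8N⁻¹ ln N,
(1 + 8N⁻¹ ln N)^{-i} ≤ C N^{-8i/N} for 1 ≤ i ≤ N/4, uniformly in N (8 ∣ N). -/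
theorem barrier_decay_estimate :
    ∃ C : ℝ, 0 < C ∧ ∀ N : ℕ, 8 ∣ N → ∀ i : ℕ, 1 ≤ i → i ≤ N / 4 →
      (1 + 8 * (N : ℝ)⁻¹ * Real.log N) ^ (-(i : ℝ)) ≤
        C * (N : ℝ) ^ (-(8 * (i : ℝ) / (N : ℝ))) := by
  refine ⟨Real.exp 64, Real.exp_pos _, ?_⟩
  intro N hdvd i hi1 hi2
  have hN8 : 8 ≤ N := by omega
  have hNR : (8:ℝ) ≤ (N:ℝ) := by exact_mod_cast hN8
  have hN0 : (0:ℝ) < (N:ℝ) := by linarith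
  have hlog : 0 ≤ Real.log N := Real.log_nonneg (by linarith)
  set t : ℝ := 8 * (N:ℝ)⁻¹ * Real.log N with ht
  have ht0 : 0 ≤ t := by positivity
  have h1t : (0:ℝ) < 1 + t := by linarith
  have hi4 : (4:ℝ) * (i:ℝ) ≤ (N:ℝ) := by
    have : 4 * i ≤ N := by omega
    exact_mod_cast this
  have hi0 : (0:ℝ) ≤ (i:ℝ) := Nat.cast_nonneg i
  -- (log N)^2 ≤ 4 N
  have hsq : Real.log N ^ 2 ≤ 4 * (N:ℝ) := by
    have hsN : (0:ℝ) < Real.sqrt N := Real.sqrt_pos.mpr hN0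
    have h1 : Real.log N = 2 * Real.log (Real.sqrt N) := by
      rw [Real.log_sqrt hN0.le]; ring
    have h2 : Real.log (Real.sqrt N) ≤ Real.sqrt N - 1 :=
      Real.log_le_sub_one_of_pos hsN
    have h3 : Real.log N ≤ 2 * Real.sqrt N := by
      rw [h1]; nlinarith
    nlinarith [Real.sq_sqrt hN0.le, Real.sqrt_nonneg (N:ℝ)]
  -- i * t^2 ≤ 64
  have hit2 : (i:ℝ) * t ^ 2 ≤ 64 := by
    have hNe : (N:ℝ) ≠ 0 := hN0.ne'
    have heq : (i:ℝ) * t ^ 2 = 64 * ((i:ℝ) * Real.log N ^ 2) / (N:ℝ) ^ 2 := by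
      rw [ht]; ring
    rw [heq, div_le_iff₀ (by positivity)]
    nlinarith [mul_le_mul hi4 hsq (by positivity) hN0.le]
  -- lower bound on log(1+t)
  have hinv : (1 + t)⁻¹ ≤ 1 - t + t ^ 2 := by
    rw [show (1 + t)⁻¹ = 1 / (1 + t) from (one_div _).symm, div_le_iff₀ h1t]
    nlinarith [mul_nonneg (mul_nonneg ht0 ht0) ht0]
  have hlb : t - t ^ 2 ≤ Real.log (1 + t) := by
    have h := Real.log_le_sub_one_of_pos (inv_pos.mpr h1t)
    rw [Real.log_inv] at h
    linarith
  have key : (i:ℝ) * t ≤ 64 + (i:ℝ) * Real.log (1 + t) := by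
    have := mul_le_mul_of_nonneg_left hlb hi0
    nlinarith
  rw [Real.rpow_def_of_pos h1t, Real.rpow_def_of_pos hN0, ← Real.exp_add,
    Real.exp_le_exp]
  have heq2 : Real.log N * (-(8 * (i:ℝ) / (N:ℝ))) = -((i:ℝ) * t) := by
    rw [ht]; ring
  rw [heq2]
  nlinarith [key]
end

section
/- Let γ, ε > 0, α ≥ 2γ, and consider the midpoint upwind operator applied to Φ_i^L = ∏_{j=1}^{i}(1 + γ h_j/ε)^{-1}: L_mp^N Φ_i^L = ε δ²Φ_i^L + a_{i+1/2} D⁺Φ_i^L - (b_{i+1}Φ_{i+1}^L + b_i Φ_i^L)/2. If a_{i+1/2} ≥ α, b_i ≥ 0, b_{i+1} ≥ 0, then L_mp^N Φ_i^L ≤ 0. -/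
/-- The midpoint upwind operator applied to the barrier function is ≤ 0 when
a_{i+1/2} ≥ α ≥ 2γ. -/
theorem midpoint_upwind_barrier_nonpos
    (γ ε α ahalf bi bi1 hi hi1 Φi Φi1 : ℝ)
    (hγ : 0 < γ) (hε : 0 < ε) (hα : 2 * γ ≤ α)
    (ha : α ≤ ahalf) (hbi : 0 ≤ bi) (hbi1 : 0 ≤ bi1)
    (hhi : 0 < hi) (hhi1 : 0 < hi1)
    (hΦi : 0 < Φi) (hΦi1 : Φi1 = Φi / (1 + γ * hi1 / ε)) :
    ε * ((γ / ε) ^ 2 * (hi1 / ((hi + hi1) / 2)) * Φi1)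
      + ahalf * (-(γ / ε) * Φi1) - (bi1 * Φi1 + bi * Φi) / 2 ≤ 0 := by
  have hden : 0 < 1 + γ * hi1 / ε := by positivity
  have hΦi1pos : 0 < Φi1 := by rw [hΦi1]; positivity
  have hsum : 0 < hi + hi1 := by linarith
  have key : ε * ((γ / ε) ^ 2 * (hi1 / ((hi + hi1) / 2)) * Φi1)
      + ahalf * (-(γ / ε) * Φi1) ≤ 0 := by
    have h1 : γ * (hi1 / ((hi + hi1) / 2)) ≤ ahalf := by
      have : hi1 / ((hi + hi1) / 2) < 2 := by
        rw [div_lt_iff₀ (by linarith)]; linarith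
      nlinarith
    have h2 : ε * ((γ / ε) ^ 2 * (hi1 / ((hi + hi1) / 2)) * Φi1)
        = (γ / ε) * Φi1 * (γ * (hi1 / ((hi + hi1) / 2))) := by
      field_simp
    have h3 : ahalf * (-(γ / ε) * Φi1) = -((γ / ε) * Φi1 * ahalf) := by ring
    rw [h2, h3]
    have hpos : 0 ≤ (γ / ε) * Φi1 := by positivity
    nlinarith
  nlinarith
end

section
/- Let γ, ε > 0, α ≥ 2γ, and Φ_i^L = ∏_{j=1}^{i}(1 + γ h_j/ε)^{-1}. Consider the central difference operator L_c^N Φ_i^L = ε δ²Φ_i^L + a_i D⁰Φ_i^L - b_i Φ_i^L with D⁰Φ_i^L = (Φ_{i+1}^L - Φ_{i-1}^L)/(2ĥ_i). If a_i ≥ α > 0 and b_i ≥ 0, then L_c^N Φ_i^L ≤ 0. -/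
/-- The central difference operator applied to the barrier function is ≤ 0 when
a_i ≥ α ≥ 2γ. -/
theorem central_barrier_nonpos
    (γ ε α ai bi hi hi1 Φim1 Φi Φi1 : ℝ)
    (hγ : 0 < γ) (hε : 0 < ε) (hα : 2 * γ ≤ α) (hα0 : 0 < α)
    (ha : α ≤ ai) (hbi : 0 ≤ bi)
    (hhi : 0 < hi) (hhi1 : 0 < hi1)
    (hΦi : 0 < Φi)
    (hΦim1 : Φim1 = (1 + γ * hi / ε) * Φi)
    (hΦi1 : Φi1 = Φi / (1 + γ * hi1 / ε)) :
    ε * ((γ / ε) ^ 2 * (hi1 / ((hi + hi1) / 2)) * Φi1)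
      + ai * ((Φi1 - Φim1) / (2 * ((hi + hi1) / 2))) - bi * Φi ≤ 0 := by
  subst hΦim1 hΦi1
  have hd : 0 < 1 + γ * hi1 / ε := by positivity
  have hh : 0 < hi + hi1 := by linarith
  have hai : 0 < ai := lt_of_lt_of_le hα0 ha
  have key : ε * ((γ / ε) ^ 2 * (hi1 / ((hi + hi1) / 2)) * (Φi / (1 + γ * hi1 / ε)))
      + ai * ((Φi / (1 + γ * hi1 / ε) - (1 + γ * hi / ε) * Φi) / (2 * ((hi + hi1) / 2))) ≤ 0 := by
    rw [div_sub' (ne_of_gt hd)]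
    field_simp
    ring_nf
    have h2 : (0:ℝ) ≤ ai - 2*γ := by linarith
    nlinarith [mul_nonneg h2 (by positivity : (0:ℝ) ≤ ε*γ*hi1*Φi),
      mul_pos (mul_pos hai hΦi) (by positivity : (0:ℝ) < ε*γ*hi),
      mul_pos (mul_pos hai hΦi) (by positivity : (0:ℝ) < γ^2*hi1*hi),
      mul_nonneg h2 (by positivity : (0:ℝ) ≤ ε^4*γ^2*hi1^3*Φi),
      mul_nonneg h2 (by positivity : (0:ℝ) ≤ ε^4*γ^2*hi1^2*hi*Φi),
      mul_nonneg h2 (by positivity : (0:ℝ) ≤ ε^5*γ*hi1*hi*Φi),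
      mul_nonneg h2 (by positivity : (0:ℝ) ≤ ε^5*γ*hi1^2*Φi),
      mul_pos (mul_pos hai hΦi) (by positivity : (0:ℝ) < ε^3*γ^3*hi1^2*hi^2),
      mul_pos (mul_pos hai hΦi) (by positivity : (0:ℝ) < ε^3*γ^3*hi1^3*hi),
      mul_pos (mul_pos hai hΦi) (by positivity : (0:ℝ) < ε^4*γ^2*hi1*hi^2),
      mul_pos (mul_pos hai hΦi) (by positivity : (0:ℝ) < ε^4*γ^2*hi1^2*hi),
      mul_pos (mul_pos hai hΦi) (by positivity : (0:ℝ) < ε^5*γ*hi^2)]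
  nlinarith [mul_nonneg hbi hΦi.le]
end
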